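/- The operator Ψ^ℓ(q) = Σ_{j=1}^L q^{j-1} (Π_{i<j} Z_i) X_j on (ℂ²)^{⊗L} satisfies (Ψ^ℓ(q))² = ((1 − q^{2L})/(1 − q²)) · Identity, for real q with q² ≠ 1. -/

import Mathlib

open Matrix

/-- Pauli X matrix. -/
noncomputable def PX : Matrix (Fin 2) (Fin 2) ℂ := !![0, 1; 1, 0]

/-- Pauli Y matrix. -/
noncomputable def PY : Matrix (Fin 2) (Fin 2) ℂ := !![0, -Complex.I; Complex.I, 0]

/-- Pauli Z matrix. -/
noncomputable def PZ : Matrix (Fin 2) (Fin 2) ℂ := !![1, 0; 0, -1]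

/-- Tensor product of one-qubit operators `f i` across a chain of `L` qubits,
as a matrix on `(ℂ²)^{⊗L}` (indexed by `Fin L → Fin 2`). -/
noncomputable def prodOp (L : ℕ) (f : Fin L → Matrix (Fin 2) (Fin 2) ℂ) :
    Matrix (Fin L → Fin 2) (Fin L → Fin 2) ℂ :=
  Matrix.of fun a b => ∏ i, f i (a i) (b i)

/-- A single-site operator `M` acting on site `j` of a chain of `L` qubits. -/
noncomputable def onSite (L : ℕ) (M : Matrix (Fin 2) (Fin 2) ℂ) (j : Fin L) :
    Matrix (Fin L → Fin 2) (Fin L → Fin 2) ℂ :=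
  prodOp L (fun i => if i = j then M else 1)


/-- The Ising strong zero mode `Ψ^ℓ(q) = Σ_j q^{j-1} (Π_{i<j} Z_i) X_j`. -/
noncomputable def isingSZM (L : ℕ) (q : ℝ) :
    Matrix (Fin L → Fin 2) (Fin L → Fin 2) ℂ :=
  ∑ j : Fin L, (q : ℂ) ^ (j : ℕ) •
    prodOp L (fun i => if i = j then PX else if i < j then PZ else 1)

/-! Each term of the zero mode is a Jordan–Wigner string `Z_0 ⋯ Z_{j-1} X_j`. These strings square
to the identity and pairwise anticommute, so the square of `∑ c_j A_j` collapses to `∑ c_j²`,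
here the geometric sum `∑_{j<L} q^{2j}`. -/

theorem Finset.sum_sum_eq_sum_diag_of_add_swap_eq_zero {ι M : Type*} [Fintype ι] [DecidableEq ι]
    [AddCommMonoid M] (f : ι → ι → M) (hf : ∀ i j, i ≠ j → f i j + f j i = 0) :
    ∑ i, ∑ j, f i j = ∑ i, f i i := by
  have hoff : ∑ p ∈ (Finset.univ : Finset ι).offDiag, f p.1 p.2 = 0 :=
    Finset.sum_involution (fun p _ => p.swap)
      (fun p hp => hf p.1 p.2 (Finset.mem_offDiag.mp hp).2.2)
      (fun p hp _ h => (Finset.mem_offDiag.mp hp).2.2 (Prod.ext_iff.mp h).2)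
      (fun p hp => by simpa [eq_comm] using hp)
      (fun p _ => p.swap_swap)
  rw [← Finset.sum_product', ← Finset.diag_union_offDiag,
    Finset.sum_union (Finset.disjoint_diag_offDiag _), hoff, add_zero, Finset.sum_diag]

theorem sum_smul_mul_self_of_anticommute {ι R A : Type*} [Fintype ι] [CommRing R] [Ring A]
    [Algebra R A] (c : ι → R) (e : ι → A) (he_sq : ∀ i, e i * e i = 1)
    (he_anti : ∀ i j, i ≠ j → e i * e j = -(e j * e i)) :
    (∑ i, c i • e i) * (∑ i, c i • e i) = (∑ i, c i ^ 2) • 1 := by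
  classical
  rw [Finset.sum_mul_sum, Finset.sum_smul]
  simp_rw [smul_mul_smul_comm]
  rw [Finset.sum_sum_eq_sum_diag_of_add_swap_eq_zero]
  · simp_rw [he_sq, sq]
  · intro i j hij
    rw [he_anti i j hij, mul_comm (c j), smul_neg, neg_add_cancel]

theorem prodOp_mul (L : ℕ) (f g : Fin L → Matrix (Fin 2) (Fin 2) ℂ) :
    prodOp L f * prodOp L g = prodOp L (fun i => f i * g i) := by
  ext a b
  simp only [prodOp, Matrix.mul_apply, Matrix.of_apply]
  rw [Fintype.prod_sum (fun i x => f i (a i) x * g i x (b i))]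
  exact Finset.sum_congr rfl fun c _ => Finset.prod_mul_distrib.symm

theorem prodOp_one (L : ℕ) : prodOp L (fun _ => 1) = 1 := by
  ext a b
  simp only [prodOp, Matrix.of_apply, Matrix.one_apply]
  by_cases h : a = b
  · subst h; simp
  · obtain ⟨i, hi⟩ := Function.ne_iff.mp h
    rw [if_neg h]
    exact Finset.prod_eq_zero (Finset.mem_univ i) (by simp [hi])

theorem prodOp_eq_neg_of_eq_neg_at (L : ℕ) (f g : Fin L → Matrix (Fin 2) (Fin 2) ℂ) (j : Fin L)
    (hj : f j = -g j) (h : ∀ i, i ≠ j → f i = g i) : prodOp L f = -prodOp L g := by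
  ext a b
  simp only [prodOp, Matrix.of_apply, Matrix.neg_apply]
  rw [← Finset.prod_erase_mul _ _ (Finset.mem_univ j),
    ← Finset.prod_erase_mul _ _ (Finset.mem_univ j), hj,
    Finset.prod_congr rfl fun i hi => by rw [h i (Finset.ne_of_mem_erase hi)]]
  simp

theorem PX_mul_PX : PX * PX = 1 := by
  rw [Matrix.one_fin_two]; norm_num [PX, Matrix.mul_fin_two]

theorem PZ_mul_PZ : PZ * PZ = 1 := by
  rw [Matrix.one_fin_two]; norm_num [PZ, Matrix.mul_fin_two]

theorem PZ_mul_PX : PZ * PX = -(PX * PZ) := by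
  norm_num [PZ, PX, Matrix.mul_fin_two]

noncomputable def jwFactor (L : ℕ) (j : Fin L) : Fin L → Matrix (Fin 2) (Fin 2) ℂ :=
  fun i => if i = j then PX else if i < j then PZ else 1

noncomputable def jwString (L : ℕ) (j : Fin L) : Matrix (Fin L → Fin 2) (Fin L → Fin 2) ℂ :=
  prodOp L (jwFactor L j)

theorem jwFactor_mul_self (L : ℕ) (j i : Fin L) : jwFactor L j i * jwFactor L j i = 1 := by
  unfold jwFactor
  split_ifs
  exacts [PX_mul_PX, PZ_mul_PZ, one_mul 1]

theorem jwString_mul_self (L : ℕ) (j : Fin L) : jwString L j * jwString L j = 1 := by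
  rw [jwString, prodOp_mul]
  simp_rw [jwFactor_mul_self]
  exact prodOp_one L

theorem jwString_anticommute_of_lt (L : ℕ) {j k : Fin L} (hjk : j < k) :
    jwString L k * jwString L j = -(jwString L j * jwString L k) := by
  simp only [jwString, prodOp_mul]
  apply prodOp_eq_neg_of_eq_neg_at L _ _ j
  · simp [jwFactor, hjk, hjk.ne, PZ_mul_PX]
  · intro i hij
    rcases hij.lt_or_gt with hij | hij
    · simp [jwFactor, hij, hij.trans hjk, hij.ne, (hij.trans hjk).ne]
    · simp [jwFactor, hij.ne', not_lt.mpr hij.le]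

theorem jwString_anticommute (L : ℕ) {j k : Fin L} (hjk : j ≠ k) :
    jwString L j * jwString L k = -(jwString L k * jwString L j) := by
  rcases hjk.lt_or_gt with h | h
  · rw [jwString_anticommute_of_lt L h, neg_neg]
  · exact jwString_anticommute_of_lt L h

theorem sum_fin_pow_sq_eq_div {q : ℂ} (hq : q ^ 2 ≠ 1) (L : ℕ) :
    ∑ j : Fin L, (q ^ (j : ℕ)) ^ 2 = (1 - q ^ (2 * L)) / (1 - q ^ 2) := by
  simp_rw [← pow_mul, mul_comm _ 2, pow_mul]
  rw [Fin.sum_univ_eq_sum_range (fun j => (q ^ 2) ^ j), geom_sum_eq hq, ← neg_div_neg_eq,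
    neg_sub, neg_sub]

/-- The Ising strong zero mode squares to
`((1 - q^{2L})/(1 - q²)) • 1` for `q² ≠ 1`. -/
theorem ising_szm_sq (L : ℕ) (q : ℝ) (hq : q ^ 2 ≠ 1) :
    isingSZM L q * isingSZM L q =
      ((1 - (q : ℂ) ^ (2 * L)) / (1 - (q : ℂ) ^ 2)) • 1 := by
  have hq' : (q : ℂ) ^ 2 ≠ 1 := by exact_mod_cast hq
  calc isingSZM L q * isingSZM L q
      = (∑ j : Fin L, ((q : ℂ) ^ (j : ℕ)) ^ 2) • 1 :=
        sum_smul_mul_self_of_anticommute _ (jwString L) (jwString_mul_self L)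
          fun _ _ => jwString_anticommute L
    _ = _ := by rw [sum_fin_pow_sq_eq_div hq']
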